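/- Let k ≥ 2, b ≥ 1 and c ≥ 0 be integers. There exists s₀ = s₀(k, b, c) such that for all integers s ≥ s₀ with n = k·s the following holds: if F is a family of k-element subsets of [n] with |F| > |E(k, n, b)|, and B ⊆ [n] is a set with b < |B| ≤ s/2, then there exist an element z ∈ B and a (k−1)-element set C ⊆ [|B|·k + 1, n − c] such that {z} ∪ C ∈ F. -/

import Mathlib

private lemma pow_add_le' (e d : ℕ) : ∀ r : ℕ, (e + d) ^ (r + 1) ≤ e ^ (r + 1) + (r + 1) * d * (e + d) ^ r := by
  intro r
  induction r with
  | zero => simp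
  | succ r ih =>
    calc (e + d) ^ (r + 2) = (e + d) * (e + d) ^ (r + 1) := by ring
    _ ≤ (e + d) * (e ^ (r + 1) + (r + 1) * d * (e + d) ^ r) := Nat.mul_le_mul_left _ ih
    _ = e * e ^ (r + 1) + d * e ^ (r + 1) + (r + 1) * d * ((e + d) * (e + d) ^ r) := by ring
    _ ≤ e ^ (r + 2) + d * (e + d) ^ (r + 1) + (r + 1) * d * (e + d) ^ (r + 1) := by
        have h1 : e * e ^ (r + 1) = e ^ (r + 2) := by ring
        have h2 : d * e ^ (r + 1) ≤ d * (e + d) ^ (r + 1) :=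
          Nat.mul_le_mul_left _ (Nat.pow_le_pow_left (Nat.le_add_right e d) _)
        have h3 : (e + d) * (e + d) ^ r = (e + d) ^ (r + 1) := by ring
        rw [h1, h3]
        exact Nat.add_le_add (Nat.add_le_add le_rfl h2) le_rfl
    _ = e ^ (r + 2) + (r + 2) * d * (e + d) ^ (r + 1) := by ring

private lemma choose_sub_le' (k : ℕ) (hk : 1 ≤ k) :
    ∀ b n : ℕ, n.choose k ≤ (n - b).choose k + b * (n - 1).choose (k - 1) := by
  intro b
  induction b with
  | zero => intro n; simp
  | succ b ih =>
    intro n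
    cases n with
    | zero =>
      have : Nat.choose 0 k = 0 := Nat.choose_eq_zero_of_lt (by omega)
      simp [this]
    | succ n =>
      obtain ⟨k', rfl⟩ : ∃ k', k = k' + 1 := ⟨k - 1, by omega⟩
      simp only [Nat.succ_sub_succ, Nat.add_sub_cancel, Nat.sub_zero]
      have pascal : (n + 1).choose (k' + 1) = n.choose k' + n.choose (k' + 1) :=
        Nat.choose_succ_succ n k'
      have h1 := ih n
      simp only [Nat.add_sub_cancel] at h1
      have h2 : b * (n - 1).choose k' ≤ b * n.choose k' :=
        Nat.mul_le_mul_left _ (Nat.choose_le_choose _ (Nat.sub_le n 1))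
      have h3 : (n - b).choose (k' + 1) ≤ (n - b).choose (k' + 1) := le_rfl
      -- goal : (n+1).choose (k'+1) ≤ (n - b).choose (k'+1) + (b+1) * n.choose k'
      have : (b + 1) * n.choose k' = b * n.choose k' + n.choose k' := by ring
      rw [this, pascal]
      linarith

private lemma core_pow (b k c m n : ℕ) (hk : 2 ≤ k) (hb : 1 ≤ b) (hm : b < m)
    (h1 : 2 * (m * k) ≤ n) (h2 : 4 * m ≤ n) (h3 : 20 * (c + k) ≤ n)
    (h4 : 2 * ((b * 5 ^ k) * (k + 1) + c + k) ≤ n)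
    (h5 : ((b * 5 ^ k) * (k + 1) + c + k) + 2 ^ k * (b * (k * ((b * 5 ^ k) * (k + 1) + c + k))) ≤ n) :
    b * n ^ (k - 1) ≤ m * (n - (m * k + m + c + k)) ^ (k - 1) := by
  obtain ⟨r', hr⟩ : ∃ r', k - 1 = r' + 1 := ⟨k - 2, by omega⟩
  rcases le_or_gt m (b * 5 ^ k) with hcase | hcase
  · -- small m
    have hMk : m * k ≤ (b * 5 ^ k) * k := Nat.mul_le_mul_right k hcase
    have hsum : m * k + m + c + k ≤ (b * 5 ^ k) * (k + 1) + c + k := by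
      have : (b * 5 ^ k) * (k + 1) = (b * 5 ^ k) * k + b * 5 ^ k := by ring
      linarith
    have hTD : n - ((b * 5 ^ k) * (k + 1) + c + k) ≤ n - (m * k + m + c + k) :=
      Nat.sub_le_sub_left hsum n
    -- abstract D
    set D := (b * 5 ^ k) * (k + 1) + c + k with hDdef
    have hDn : D ≤ n := by linarith
    have key : n ^ (r' + 1) ≤ (n - D) ^ (r' + 1) + (r' + 1) * D * n ^ r' := by
      have h := pow_add_le' (n - D) D r'
      rw [Nat.sub_add_cancel hDn] at h
      exact h
    have hZ : 2 ^ k * (b * (k * D)) ≤ n - D := by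
      apply Nat.le_sub_of_add_le
      linarith
    have hZle : 2 ^ r' * (b * ((r' + 1) * D)) ≤ 2 ^ k * (b * (k * D)) := by
      apply Nat.mul_le_mul
      · exact Nat.pow_le_pow_right (by norm_num) (by omega)
      · apply Nat.mul_le_mul_left
        apply Nat.mul_le_mul_right
        omega
    have h2e : n ≤ 2 * (n - D) := by omega
    have big : b * ((r' + 1) * D * n ^ r') ≤ (n - D) ^ (r' + 1) := by
      have hpos : 0 < 2 ^ r' := Nat.pow_pos (n := r') (by norm_num)
      refine Nat.le_of_mul_le_mul_left ?_ hpos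
      calc 2 ^ r' * (b * ((r' + 1) * D * n ^ r'))
            = (2 ^ r' * (b * ((r' + 1) * D))) * n ^ r' := by ring
        _ ≤ (n - D) * n ^ r' := Nat.mul_le_mul_right _ (le_trans hZle hZ)
        _ ≤ (n - D) * (2 * (n - D)) ^ r' := Nat.mul_le_mul_left _ (Nat.pow_le_pow_left h2e _)
        _ = 2 ^ r' * (n - D) ^ (r' + 1) := by rw [mul_pow]; ring
    have main : b * n ^ (r' + 1) ≤ (b + 1) * (n - D) ^ (r' + 1) := by
      calc b * n ^ (r' + 1) ≤ b * ((n - D) ^ (r' + 1) + (r' + 1) * D * n ^ r') :=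
            Nat.mul_le_mul_left _ key
      _ = b * (n - D) ^ (r' + 1) + b * ((r' + 1) * D * n ^ r') := by ring
      _ ≤ b * (n - D) ^ (r' + 1) + (n - D) ^ (r' + 1) := Nat.add_le_add le_rfl big
      _ = (b + 1) * (n - D) ^ (r' + 1) := by ring
    rw [hr]
    calc b * n ^ (r' + 1) ≤ (b + 1) * (n - D) ^ (r' + 1) := main
    _ ≤ m * (n - D) ^ (r' + 1) := Nat.mul_le_mul_right _ (by omega)
    _ ≤ m * (n - (m * k + m + c + k)) ^ (r' + 1) :=
        Nat.mul_le_mul_left _ (Nat.pow_le_pow_left hTD _)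
  · -- large m
    have hle : m * k + m + c + k ≤ n := by linarith
    have h5T : n ≤ 5 * (n - (m * k + m + c + k)) := by
      have h20 : 20 * (m * k + m + c + k) ≤ 16 * n := by linarith
      omega
    set T := n - (m * k + m + c + k) with hT
    calc b * n ^ (k - 1) ≤ b * (5 * T) ^ (k - 1) :=
          Nat.mul_le_mul_left _ (Nat.pow_le_pow_left h5T _)
    _ = (b * 5 ^ (k - 1)) * T ^ (k - 1) := by rw [mul_pow]; ring
    _ ≤ m * T ^ (k - 1) := by
        apply Nat.mul_le_mul_right
        have : 5 ^ (k - 1) ≤ 5 ^ k := Nat.pow_le_pow_right (by norm_num) (by omega)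
        have : b * 5 ^ (k - 1) ≤ b * 5 ^ k := Nat.mul_le_mul_left _ this
        omega

/-- `F` is a family of `k`-element subsets of `[n] = {1, …, n}`. -/
def IsFamily (n k : ℕ) (F : Finset (Finset ℕ)) : Prop :=
  ∀ A ∈ F, A ⊆ Finset.Icc 1 n ∧ A.card = k

/-- `M` is a matching in the family `F`: a collection of pairwise disjoint members of `F`. -/
def IsMatchingIn (F M : Finset (Finset ℕ)) : Prop :=
  M ⊆ F ∧ (M : Set (Finset ℕ)).PairwiseDisjoint id

/-- The collection `M` covers the set `B`. -/
def Covers (M : Finset (Finset ℕ)) (B : Finset ℕ) : Prop :=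
  B ⊆ M.biUnion id

/-- `F` has a perfect matching: a matching covering all of `[n]`. -/
def HasPerfectMatching (n : ℕ) (F : Finset (Finset ℕ)) : Prop :=
  ∃ M, IsMatchingIn F M ∧ Covers M (Finset.Icc 1 n)

/-- `B` is a blocking set of `F` (with `s = n / k`): a subset of `[n]` of size at most `s`
that is not covered by any matching in `F` of size `|B|`. -/
def IsBlockingSet (n s : ℕ) (F : Finset (Finset ℕ)) (B : Finset ℕ) : Prop :=
  B ⊆ Finset.Icc 1 n ∧ B.card ≤ s ∧
    ¬ ∃ M, IsMatchingIn F M ∧ M.card = B.card ∧ Covers M B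
/-- An admissible choice of the pairwise disjoint `(k-1)`-element sets
`E_1, …, E_{b-1} ⊆ [b+1, n]` used in the construction of `E(k, n, b)`. -/
def AdmissibleChoice (n k b : ℕ) (E : ℕ → Finset ℕ) : Prop :=
  (∀ i ∈ Finset.Icc 1 (b - 1), E i ⊆ Finset.Icc (b + 1) n ∧ (E i).card = k - 1) ∧
    ∀ i ∈ Finset.Icc 1 (b - 1), ∀ j ∈ Finset.Icc 1 (b - 1), i ≠ j → Disjoint (E i) (E j)

/-- The subfamily `𝓔_i`: the set `{i} ∪ E_i` (omitted when `i = b`), together with all sets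
`{i} ∪ S` where `S ⊆ [b+1, n]`, `|S| = k-1` and `S` meets `E_1 ∪ ⋯ ∪ E_{i-1}`. -/
def famEpart (n k b : ℕ) (E : ℕ → Finset ℕ) (i : ℕ) : Finset (Finset ℕ) :=
  (((Finset.Icc (b + 1) n).powersetCard (k - 1)).filter
      (fun S => (i < b ∧ S = E i) ∨ (S ∩ (Finset.Icc 1 (i - 1)).biUnion E).Nonempty)).image
    (fun S => insert i S)

/-- The family `E(k, n, b)`: all `k`-element subsets of `[b+1, n]` together with
`𝓔_1 ∪ ⋯ ∪ 𝓔_b`. -/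
def famE (n k b : ℕ) (E : ℕ → Finset ℕ) : Finset (Finset ℕ) :=
  (Finset.Icc (b + 1) n).powersetCard k ∪ (Finset.Icc 1 b).biUnion (famEpart n k b E)

private lemma exists_adm (n k b : ℕ) (hk : 2 ≤ k) (hb : 1 ≤ b) (hn : b + b * k ≤ n) :
    AdmissibleChoice n k b (fun i => Finset.Icc (b + (i - 1) * (k - 1) + 1) (b + i * (k - 1))) := by
  constructor
  · intro i hi
    rw [Finset.mem_Icc] at hi
    obtain ⟨j, rfl⟩ : ∃ j, i = j + 1 := ⟨i - 1, by omega⟩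
    simp only [Nat.add_sub_cancel]
    constructor
    · apply Finset.Icc_subset_Icc
      · have : 0 ≤ j * (k - 1) := Nat.zero_le _
        omega
      · have h1 : (j + 1) * (k - 1) ≤ b * (k - 1) := Nat.mul_le_mul_right _ (by omega)
        have h2 : b * (k - 1) ≤ b * k := Nat.mul_le_mul_left _ (by omega)
        linarith
    · rw [Nat.card_Icc]
      have h3 : (j + 1) * (k - 1) = j * (k - 1) + (k - 1) := by ring
      rw [h3]
      generalize j * (k - 1) = t
      omega
  · have key : ∀ i j : ℕ, 1 ≤ i → i < j →
        Disjoint (Finset.Icc (b + (i - 1) * (k - 1) + 1) (b + i * (k - 1)))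
          (Finset.Icc (b + (j - 1) * (k - 1) + 1) (b + j * (k - 1))) := by
      intro i j h1 hij
      rw [Finset.disjoint_left]
      intro x hx hx'
      rw [Finset.mem_Icc] at hx hx'
      have h2 : i * (k - 1) ≤ (j - 1) * (k - 1) := Nat.mul_le_mul_right _ (by omega)
      have := hx.2
      have := hx'.1
      linarith
    intro i hi j hj hij
    rw [Finset.mem_Icc] at hi hj
    rcases lt_or_gt_of_ne hij with h | h
    · exact key i j hi.1 h
    · exact (key j i hj.1 h).symm

/-- Claim in Section 4.1: For `s` large enough, if `|F| > |E(k, n, b)|`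
and `B ⊆ [n]` satisfies `b < |B| ≤ s/2`, then `F` contains a set of the form `{z} ∪ C`
with `z ∈ B` and `C` a `(k-1)`-element subset of `[|B|·k + 1, n - c]`. -/
theorem statement19 (k b c : ℕ) (hk : 2 ≤ k) (hb : 1 ≤ b) :
    ∃ s₀ : ℕ, ∀ s : ℕ, s₀ ≤ s → ∀ n : ℕ, n = k * s →
      ∀ F : Finset (Finset ℕ), IsFamily n k F →
        (∀ E : ℕ → Finset ℕ, AdmissibleChoice n k b E → (famE n k b E).card < F.card) →
        ∀ B : Finset ℕ, B ⊆ Finset.Icc 1 n → b < B.card → 2 * B.card ≤ s →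
          ∃ z ∈ B, ∃ C : Finset ℕ, C ⊆ Finset.Icc (B.card * k + 1) (n - c) ∧
            C.card = k - 1 ∧ z ∉ C ∧ insert z C ∈ F := by
  refine ⟨b * k + 20 * (c + k) + 2 * ((b * 5 ^ k) * (k + 1) + c + k) +
    (((b * 5 ^ k) * (k + 1) + c + k) + 2 ^ k * (b * (k * ((b * 5 ^ k) * (k + 1) + c + k)))), ?_⟩
  intro s hs n hn F hFam hcard B hB hbB h2B
  by_contra hcon
  push_neg at hcon
  set m := B.card with hm
  -- basic size facts
  have h2s : 2 * s ≤ n := by rw [hn]; exact Nat.mul_le_mul_right s hk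
  have hsn : s ≤ n := by omega
  have h1 : 2 * (m * k) ≤ n := by
    have : 2 * m * k ≤ s * k := Nat.mul_le_mul_right k h2B
    rw [hn]; rw [mul_comm k s]; linarith [this]
  have h2 : 4 * m ≤ n := by linarith
  have hbig : 2 * (b * k) ≤ n ∧ 20 * (c + k) ≤ n ∧ 2 * ((b * 5 ^ k) * (k + 1) + c + k) ≤ n ∧
      ((b * 5 ^ k) * (k + 1) + c + k) +
        2 ^ k * (b * (k * ((b * 5 ^ k) * (k + 1) + c + k))) ≤ n := by
    have h := hs
    generalize hA : (b * 5 ^ k) * (k + 1) + c + k = A at h ⊢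
    generalize hA4 : 2 ^ k * (b * (k * A)) = A4 at h ⊢
    generalize hA1 : b * k = A1 at h ⊢
    omega
  have h3 : 20 * (c + k) ≤ n := hbig.2.1
  have h4 : 2 * ((b * 5 ^ k) * (k + 1) + c + k) ≤ n := hbig.2.2.1
  have h5 : ((b * 5 ^ k) * (k + 1) + c + k) +
      2 ^ k * (b * (k * ((b * 5 ^ k) * (k + 1) + c + k))) ≤ n := hbig.2.2.2
  have hbkn : b + b * k ≤ n := by
    have h7 : b ≤ b * k := Nat.le_mul_of_pos_right b (by omega)
    have h8 := hbig.1
    linarith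
  -- lower bound on F.card
  have hadm := exists_adm n k b hk hb hbkn
  have hcard' := hcard _ hadm
  have hE1 : (n - b).choose k ≤
      (famE n k b (fun i => Finset.Icc (b + (i - 1) * (k - 1) + 1) (b + i * (k - 1)))).card := by
    have heq : ((Finset.Icc (b + 1) n).powersetCard k).card = (n - b).choose k := by
      rw [Finset.card_powersetCard, Nat.card_Icc]
      congr 1
      omega
    rw [← heq]
    exact Finset.card_le_card Finset.subset_union_left
  have hF1 : (n - b).choose k < F.card := lt_of_le_of_lt hE1 hcard'
  -- the good sets
  set X := Finset.Icc (m * k + 1) (n - c) \ B with hX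
  set Good := B.biUnion (fun z => (X.powersetCard (k - 1)).image (insert z)) with hGood
  have hzX : ∀ z ∈ B, z ∉ X := by
    intro z hz h
    exact (Finset.mem_sdiff.mp h).2 hz
  have hdisj : ∀ x ∈ B, ∀ y ∈ B, x ≠ y →
      Disjoint ((X.powersetCard (k - 1)).image (insert x))
        ((X.powersetCard (k - 1)).image (insert y)) := by
    intro x hx y hy hxy
    rw [Finset.disjoint_left]
    rintro A hA hA'
    obtain ⟨S, hS, rfl⟩ := Finset.mem_image.mp hA
    obtain ⟨T, hT, hEq⟩ := Finset.mem_image.mp hA'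
    have hyA : y ∈ insert x S := by
      rw [← hEq]; exact Finset.mem_insert_self y T
    rcases Finset.mem_insert.mp hyA with h | h
    · exact hxy h.symm
    · exact hzX y hy ((Finset.mem_powersetCard.mp hS).1 h)
  have hGoodF : Disjoint F Good := by
    rw [Finset.disjoint_right]
    intro A hA
    obtain ⟨z, hz, hA2⟩ := Finset.mem_biUnion.mp hA
    obtain ⟨S, hS, rfl⟩ := Finset.mem_image.mp hA2
    obtain ⟨hSX, hScard⟩ := Finset.mem_powersetCard.mp hS
    have hzS : z ∉ S := fun h => hzX z hz (hSX h)
    exact hcon z hz S (hSX.trans Finset.sdiff_subset) hScard hzS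
  have hFsub : F ⊆ (Finset.Icc 1 n).powersetCard k := by
    intro A hA
    exact Finset.mem_powersetCard.mpr ⟨(hFam A hA).1, (hFam A hA).2⟩
  have hGoodsub : Good ⊆ (Finset.Icc 1 n).powersetCard k := by
    intro A hA
    obtain ⟨z, hz, hA2⟩ := Finset.mem_biUnion.mp hA
    obtain ⟨S, hS, rfl⟩ := Finset.mem_image.mp hA2
    obtain ⟨hSX, hScard⟩ := Finset.mem_powersetCard.mp hS
    have hzS : z ∉ S := fun h => hzX z hz (hSX h)
    refine Finset.mem_powersetCard.mpr ⟨?_, ?_⟩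
    · apply Finset.insert_subset (hB hz)
      refine (hSX.trans Finset.sdiff_subset).trans (Finset.Icc_subset_Icc ?_ ?_)
      · omega
      · exact Nat.sub_le n c
    · rw [Finset.card_insert_of_notMem hzS, hScard]
      omega
  have hFG : F.card + Good.card ≤ n.choose k := by
    rw [← Finset.card_union_of_disjoint hGoodF]
    calc (F ∪ Good).card ≤ ((Finset.Icc 1 n).powersetCard k).card :=
          Finset.card_le_card (Finset.union_subset hFsub hGoodsub)
    _ = n.choose k := by
        rw [Finset.card_powersetCard, Nat.card_Icc]
        simp
  -- lower bound on Good.card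
  have hle : m * k + m + c + k ≤ n := by linarith
  obtain ⟨P, hP⟩ : ∃ P, P = n - c - m * k - m := ⟨_, rfl⟩
  have hXP : P ≤ X.card := by
    have h6 := Finset.le_card_sdiff B (Finset.Icc (m * k + 1) (n - c))
    rw [Nat.card_Icc] at h6
    refine le_trans ?_ h6
    rw [hP, ← hm]
    generalize m * k = q
    omega
  have hGoodcard : m * P.choose (k - 1) ≤ Good.card := by
    rw [hGood, Finset.card_biUnion hdisj]
    have hone : ∀ z ∈ B, P.choose (k - 1) ≤ ((X.powersetCard (k - 1)).image (insert z)).card := by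
      intro z hz
      have hinj : Set.InjOn (insert z) ((X.powersetCard (k - 1) : Finset (Finset ℕ)) : Set (Finset ℕ)) := by
        intro S hS T hT hST
        have hzS : z ∉ S := fun h =>
          hzX z hz ((Finset.mem_powersetCard.mp (Finset.mem_coe.mp hS)).1 h)
        have hzT : z ∉ T := fun h =>
          hzX z hz ((Finset.mem_powersetCard.mp (Finset.mem_coe.mp hT)).1 h)
        calc S = (insert z S).erase z := (Finset.erase_insert hzS).symm
        _ = (insert z T).erase z := by rw [hST]
        _ = T := Finset.erase_insert hzT
      rw [Finset.card_image_of_injOn hinj, Finset.card_powersetCard]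
      exact Nat.choose_le_choose _ hXP
    have hsum := Finset.sum_le_sum hone
    rw [Finset.sum_const, smul_eq_mul, ← hm] at hsum
    exact hsum
  -- numeric chain
  have hTP : n - (m * k + m + c + k) ≤ P + 1 - (k - 1) := by
    rw [hP]
    generalize m * k = q
    omega
  have hcore : b * n ^ (k - 1) ≤ m * (n - (m * k + m + c + k)) ^ (k - 1) :=
    core_pow b k c m n hk hb hbB h1 h2 h3 h4 h5
  have hd1 : b * ((n - 1).descFactorial (k - 1)) ≤ m * (P.descFactorial (k - 1)) := by
    calc b * ((n - 1).descFactorial (k - 1)) ≤ b * (n - 1) ^ (k - 1) :=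
          Nat.mul_le_mul_left _ (Nat.descFactorial_le_pow _ _)
    _ ≤ b * n ^ (k - 1) := Nat.mul_le_mul_left _ (Nat.pow_le_pow_left (Nat.sub_le n 1) _)
    _ ≤ m * (n - (m * k + m + c + k)) ^ (k - 1) := hcore
    _ ≤ m * (P + 1 - (k - 1)) ^ (k - 1) := Nat.mul_le_mul_left _ (Nat.pow_le_pow_left hTP _)
    _ ≤ m * (P.descFactorial (k - 1)) :=
          Nat.mul_le_mul_left _ (Nat.pow_sub_le_descFactorial P (k - 1))
  have hchain : b * (n - 1).choose (k - 1) ≤ m * P.choose (k - 1) := by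
    rw [Nat.descFactorial_eq_factorial_mul_choose, Nat.descFactorial_eq_factorial_mul_choose,
      mul_left_comm b, mul_left_comm m] at hd1
    exact Nat.le_of_mul_le_mul_left hd1 (Nat.factorial_pos _)
  have hch : n.choose k ≤ (n - b).choose k + b * (n - 1).choose (k - 1) :=
    choose_sub_le' k (by omega) b n
  linarith
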